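/- arXiv:1706.05586 — 2 statements merged into one kernel-verified Lean document; each statement's English description precedes it below -/
import Mathlib

section
/- Let J ∈ R^{(n_d n_s)×n_p} with block structure J_{j,k} ∈ R^{n_d}, W ∈ R^{n_s×ℓ_s} and V ∈ R^{n_d×ℓ_d} with orthonormal columns, and Ĵ_i = w_i ⋆ J for each column w_i of W. If V^T [Ĵ_1 … Ĵ_{ℓ_s}] has SVD Φ Ω Ψ^T, then Γ = [φ_1 … φ_{ℓ_d - s}] (the first ℓ_d - s left singular vectors) solves Γ = argmax over Γ̃ ∈ R^{ℓ_d×(ℓ_d-s)} with Γ̃^T Γ̃ = I of ‖(W^T ⊗ (V Γ̃)^T) J‖_F^2. -/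
open Matrix
open scoped BigOperators Kronecker

/-!
Unfolding the Kronecker product, the objective at `Γ̃` is `‖Γ̃ᵀ Vᵀ [Ĵ_1 … Ĵ_{ℓ_s}]‖_F²`, and by the
SVD this is `tr (Mᵀ diag(c) M)` with `M = Φᵀ Γ̃` and `c_i = ω_i²` (or `0` past the last column
of `Ω`). `M` has orthonormal columns, so the diagonal entries `r_i` of the projection `M Mᵀ`
lie in `[0, 1]` and add up to `ℓ_d - s`. For decreasing `c`, `∑ c_i r_i` is then at most the sum
of the first `ℓ_d - s` weights (compare termwise with the threshold `c_{ℓ_d - s}`), and this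
value is attained by `M = [I; 0]`, i.e. by the first `ℓ_d - s` columns of `Φ`.
-/

/-- Squared Frobenius norm of a real matrix. -/
def frobSq {α β : Type*} [Fintype α] [Fintype β] (A : Matrix α β ℝ) : ℝ :=
  ∑ i, ∑ j, A i j ^ 2

/-- `w ⋆ J ∈ ℝ^{n_d × n_p}` with `k`-th column `∑ j, w j • J_{j,k}`. -/
def starOp {nd ns np : ℕ} (w : Fin ns → ℝ) (J : Matrix (Fin ns × Fin nd) (Fin np) ℝ) :
    Matrix (Fin nd) (Fin np) ℝ :=
  Matrix.of fun i k => ∑ j, w j * J (j, i) k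

/-- Rectangular "diagonal" matrix of singular values, the column index being a product
type enumerated by `finProdFinEquiv`. -/
def svDiagR (m : ℕ) (a b : ℕ) (ω : ℕ → ℝ) : Matrix (Fin m) (Fin a × Fin b) ℝ :=
  Matrix.of fun i q => if (i : ℕ) = ((finProdFinEquiv q : Fin (a * b)) : ℕ) then ω i else 0

/-- The paper's `[Ĵ_1 … Ĵ_{ℓ_s}]`, `Ĵ_a = w_a ⋆ J`: column `(a, k)` is the `k`-th column
of `Ĵ_a`. -/
def starBlocks {nd ns np ls : ℕ} (W : Matrix (Fin ns) (Fin ls) ℝ)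
    (J : Matrix (Fin ns × Fin nd) (Fin np) ℝ) : Matrix (Fin nd) (Fin ls × Fin np) ℝ :=
  Matrix.of fun i q => starOp (fun j => W j q.1) J i q.2

section Kronecker

variable {nd ns np ls : ℕ} {γ : Type*} (W : Matrix (Fin ns) (Fin ls) ℝ)
  (C : Matrix (Fin nd) γ ℝ) (J : Matrix (Fin ns × Fin nd) (Fin np) ℝ)

theorem kronecker_transpose_mul_apply (a : Fin ls) (b : γ) (k : Fin np) :
    ((Wᵀ ⊗ₖ Cᵀ) * J) (a, b) k = (Cᵀ * starBlocks W J) b (a, k) := by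
  simp only [mul_apply, kroneckerMap_apply, transpose_apply, starBlocks, starOp, of_apply,
    Fintype.sum_prod_type, Finset.mul_sum]
  rw [Finset.sum_comm]
  exact Finset.sum_congr rfl fun i _ => Finset.sum_congr rfl fun j _ => by ring

theorem frobSq_kronecker_transpose_mul [Fintype γ] :
    frobSq ((Wᵀ ⊗ₖ Cᵀ) * J) = frobSq (Cᵀ * starBlocks W J) := by
  simp only [frobSq, kronecker_transpose_mul_apply, Fintype.sum_prod_type]
  exact Finset.sum_comm

end Kronecker

theorem frobSq_eq_trace {α β : Type*} [Fintype α] [Fintype β] (A : Matrix α β ℝ) :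
    frobSq A = trace (A * Aᵀ) := by
  simp [frobSq, trace, mul_apply, sq]

theorem frobSq_mul_eq_trace {α β γ : Type*} [Fintype α] [Fintype β] [Fintype γ]
    (A : Matrix α β ℝ) (B : Matrix β γ ℝ) : frobSq (A * B) = trace (A * (B * Bᵀ) * Aᵀ) := by
  rw [frobSq_eq_trace, transpose_mul, Matrix.mul_assoc, Matrix.mul_assoc, Matrix.mul_assoc]

/-- The diagonal of `Ω Ωᵀ` for the `n × N` singular-value matrix `Ω`. -/
def svWeights (N : ℕ) (ω : ℕ → ℝ) (n : ℕ) : Fin n → ℝ :=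
  fun i => if (i : ℕ) < N then ω i ^ 2 else 0

theorem antitone_svWeights {ω : ℕ → ℝ} (hω : Antitone ω) (hω0 : 0 ≤ ω) (N n : ℕ) :
    Antitone (svWeights N ω n) := fun i j (hij : (i : ℕ) ≤ j) => by
  by_cases hj : (j : ℕ) < N
  · simp only [svWeights, hj, hij.trans_lt hj, if_true]
    exact pow_le_pow_left₀ (hω0 j) (hω hij) 2
  · simp only [svWeights, hj, if_false]
    split_ifs <;> positivity

theorem svWeights_nonneg (N : ℕ) (ω : ℕ → ℝ) (n : ℕ) : 0 ≤ svWeights N ω n := fun i => by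
  simp only [svWeights]
  split_ifs <;> positivity

theorem svDiagR_mul_transpose (m a b : ℕ) (ω : ℕ → ℝ) :
    svDiagR m a b ω * (svDiagR m a b ω)ᵀ = diagonal (svWeights (a * b) ω m) := by
  ext i i'
  rw [mul_apply, ← finProdFinEquiv.symm.sum_comp]
  simp only [svDiagR, of_apply, transpose_apply, Equiv.apply_symm_apply]
  rw [Fin.sum_univ_eq_sum_range (fun k => (if (i : ℕ) = k then ω i else 0) *
    (if (i' : ℕ) = k then ω i' else 0))]
  by_cases hii : i = i'
  · subst hii
    simp [svWeights, ← sq]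
  · simp [hii, Fin.val_eq_val]

theorem frobSq_kronecker_eq_trace {nd ns np ls ld : ℕ} {γ : Type*} [Fintype γ]
    {J : Matrix (Fin ns × Fin nd) (Fin np) ℝ} {W : Matrix (Fin ns) (Fin ls) ℝ}
    {V : Matrix (Fin nd) (Fin ld) ℝ} {Φ : Matrix (Fin ld) (Fin ld) ℝ}
    {Ψ : Matrix (Fin ls × Fin np) (Fin ls × Fin np) ℝ} {ω : ℕ → ℝ} (hΨ : Ψᵀ * Ψ = 1)
    (hSVD : Vᵀ * starBlocks W J = Φ * svDiagR ld ls np ω * Ψᵀ) (Γ : Matrix (Fin ld) γ ℝ) :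
    frobSq ((Wᵀ ⊗ₖ (V * Γ)ᵀ) * J) =
      trace ((Φᵀ * Γ)ᵀ * diagonal (svWeights (ls * np) ω ld) * (Φᵀ * Γ)) := by
  have hSS : (svDiagR ld ls np ω * Ψᵀ) * (svDiagR ld ls np ω * Ψᵀ)ᵀ =
      diagonal (svWeights (ls * np) ω ld) := by
    rw [transpose_mul, transpose_transpose, Matrix.mul_assoc, ← Matrix.mul_assoc Ψᵀ, hΨ,
      Matrix.one_mul, svDiagR_mul_transpose]
  rw [frobSq_kronecker_transpose_mul, transpose_mul, Matrix.mul_assoc, hSVD,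
    Matrix.mul_assoc Φ, ← Matrix.mul_assoc Γᵀ, frobSq_mul_eq_trace, hSS]
  simp only [transpose_mul, transpose_transpose]

section Threshold

open Finset

theorem sum_mul_le_sum_of_threshold {ι : Type*} [Fintype ι] [DecidableEq ι] (c r : ι → ℝ)
    (S : Finset ι) (t : ℝ) (hS : ∀ i ∈ S, t ≤ c i) (hSc : ∀ i ∉ S, c i ≤ t)
    (hr0 : ∀ i, 0 ≤ r i) (hr1 : ∀ i, r i ≤ 1) (hsum : ∑ i, r i = #S) :
    ∑ i, c i * r i ≤ ∑ i ∈ S, c i := by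
  have hpt : ∀ i, (c i - t) * r i ≤ if i ∈ S then c i - t else 0 := by
    intro i
    split_ifs with hi
    · nlinarith [hS i hi, hr1 i]
    · nlinarith [hSc i hi, hr0 i]
  have hsum_le := sum_le_sum fun i (_ : i ∈ univ) => hpt i
  rw [sum_ite_mem, univ_inter] at hsum_le
  simp only [sub_mul, sum_sub_distrib, ← mul_sum, hsum, sum_const, nsmul_eq_mul] at hsum_le
  linarith

end Threshold

section Orthonormal

variable {m n : Type*} [Fintype n]

theorem diag_mul_transpose_self_nonneg (M : Matrix m n ℝ) (i : m) : 0 ≤ (M * Mᵀ) i i := by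
  simp only [mul_apply, transpose_apply]
  exact Finset.sum_nonneg fun b _ => mul_self_nonneg _

theorem diag_mul_transpose_self_le_one [Fintype m] [DecidableEq n] {M : Matrix m n ℝ}
    (hM : Mᵀ * M = 1) (i : m) : (M * Mᵀ) i i ≤ 1 := by
  set P := M * Mᵀ
  have hP : P * P = P := by
    simp only [P, Matrix.mul_assoc, ← Matrix.mul_assoc Mᵀ, hM, Matrix.one_mul]
  have hPi : P i i = ∑ j, P i j ^ 2 := by
    conv_lhs => rw [← hP]
    simp [P, mul_apply, sq, mul_comm]
  have : P i i ^ 2 ≤ P i i :=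
    hPi ▸ Finset.single_le_sum (f := fun j => P i j ^ 2) (fun j _ => sq_nonneg _)
      (Finset.mem_univ i)
  nlinarith [diag_mul_transpose_self_nonneg M i]

theorem trace_mul_transpose_self [Fintype m] [DecidableEq n] {M : Matrix m n ℝ}
    (hM : Mᵀ * M = 1) : trace (M * Mᵀ) = Fintype.card n := by
  rw [trace_mul_comm, hM, trace_one]

theorem trace_transpose_mul_diagonal_mul [Fintype m] [DecidableEq m] (M : Matrix m n ℝ)
    (c : m → ℝ) : trace (Mᵀ * diagonal c * M) = ∑ i, c i * (M * Mᵀ) i i := by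
  rw [Matrix.mul_assoc, trace_mul_comm, Matrix.mul_assoc, trace]
  simp [diagonal_mul]

end Orthonormal

theorem trace_transpose_mul_diagonal_mul_le {n m : ℕ} (h : m ≤ n) {c : Fin n → ℝ}
    (hc : Antitone c) (hc0 : 0 ≤ c) {M : Matrix (Fin n) (Fin m) ℝ} (hM : Mᵀ * M = 1) :
    trace (Mᵀ * diagonal c * M) ≤ ∑ b, c (Fin.castLE h b) := by
  set S := Finset.univ.map (Fin.castLEEmb h)
  have hS : ∀ i, i ∈ S ↔ (i : ℕ) < m := fun i => by
    simp only [S, Finset.mem_map, Finset.mem_univ, true_and]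
    exact ⟨by rintro ⟨b, rfl⟩; exact b.isLt, fun hi => ⟨⟨i, hi⟩, rfl⟩⟩
  rw [trace_transpose_mul_diagonal_mul,
    show ∑ b, c (Fin.castLE h b) = ∑ i ∈ S, c i from (Finset.sum_map _ (Fin.castLEEmb h) c).symm]
  refine sum_mul_le_sum_of_threshold c _ S (if hm : m < n then c ⟨m, hm⟩ else 0) ?_ ?_
    (diag_mul_transpose_self_nonneg M) (diag_mul_transpose_self_le_one hM) ?_
  · intro i hi
    split_ifs with hm
    · exact hc (Nat.le_of_lt ((hS i).1 hi) : i ≤ ⟨m, hm⟩)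
    · exact hc0 i
  · intro i hi
    have hm : m < n := ((not_lt.1 ((hS i).not.1 hi)).trans_lt i.isLt)
    rw [dif_pos hm]
    exact hc (not_lt.1 ((hS i).not.1 hi) : (⟨m, hm⟩ : Fin n) ≤ i)
  · change trace (M * Mᵀ) = _
    rw [trace_mul_transpose_self hM, Finset.card_map]
    simp

theorem transpose_mul_mul_submatrix_one {α β : Type*} [Fintype α] [DecidableEq α] (f : β → α)
    (X : Matrix α α ℝ) :
    ((1 : Matrix α α ℝ).submatrix id f)ᵀ * X * (1 : Matrix α α ℝ).submatrix id f =
      X.submatrix f f := by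
  ext i j
  simp [mul_apply, one_apply]

theorem downdating_detectors_optimal_general
    (nd ns np ls ld s : ℕ)
    (J : Matrix (Fin ns × Fin nd) (Fin np) ℝ)
    (W : Matrix (Fin ns) (Fin ls) ℝ) (V : Matrix (Fin nd) (Fin ld) ℝ)
    (Φ : Matrix (Fin ld) (Fin ld) ℝ) (Ψ : Matrix (Fin ls × Fin np) (Fin ls × Fin np) ℝ)
    (ω : ℕ → ℝ)
    (hΦ : Φᵀ * Φ = 1) (hΨ : Ψᵀ * Ψ = 1)
    (hword : ∀ i j : ℕ, i ≤ j → ω j ≤ ω i) (hw0 : ∀ i, 0 ≤ ω i)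
    (hSVD : Vᵀ * (Matrix.of fun i (q : Fin ls × Fin np) => starOp (fun j => W j q.1) J i q.2)
      = Φ * svDiagR ld ls np ω * Ψᵀ) :
    IsGreatest
      {x : ℝ | ∃ Γt : Matrix (Fin ld) (Fin (ld - s)) ℝ, Γtᵀ * Γt = 1 ∧
        x = frobSq ((Wᵀ ⊗ₖ (V * Γt)ᵀ) * J)}
      (frobSq ((Wᵀ ⊗ₖ (V * Φ.submatrix id (Fin.castLE (Nat.sub_le ld s)))ᵀ) * J)) := by
  have hobj := frobSq_kronecker_eq_trace (γ := Fin (ld - s)) (J := J) (W := W) (V := V) hΨ hSVD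
  set f := Fin.castLE (Nat.sub_le ld s)
  set E := (1 : Matrix (Fin ld) (Fin ld) ℝ).submatrix id f
  have hΓ0 : Φ.submatrix id f = Φ * E := (mul_submatrix_one (Equiv.refl _) f Φ).symm
  have hE : Φᵀ * (Φ * E) = E := by rw [← Matrix.mul_assoc, hΦ, Matrix.one_mul]
  refine ⟨⟨_, ?_, rfl⟩, ?_⟩
  · rw [hΓ0, transpose_mul, Matrix.mul_assoc, ← Matrix.mul_assoc Φᵀ, hΦ, Matrix.one_mul,
      ← Matrix.mul_one Eᵀ, transpose_mul_mul_submatrix_one,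
      submatrix_one f (Fin.castLE_injective _)]
  · rintro x ⟨Γ, hΓ, rfl⟩
    have hM : (Φᵀ * Γ)ᵀ * (Φᵀ * Γ) = 1 := by
      rw [transpose_mul, transpose_transpose, Matrix.mul_assoc, ← Matrix.mul_assoc Φ,
        mul_eq_one_comm.mp hΦ, Matrix.one_mul, hΓ]
    rw [hobj, hobj, hΓ0, hE, transpose_mul_mul_submatrix_one,
      submatrix_diagonal _ f (Fin.castLE_injective _), trace_diagonal]
    exact trace_transpose_mul_diagonal_mul_le _ (antitone_svWeights hword hw0 _ _)
      (svWeights_nonneg _ _ _) hM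

/-- Let `W, V` have orthonormal columns, `Ĵ_a = w_a ⋆ J` for the columns `w_a` of `W`,
and let `Vᵀ [Ĵ_1 … Ĵ_{ℓ_s}] = Φ Ω Ψᵀ` be an SVD with decreasing singular values.
Then `Γ = [φ_1 … φ_{ℓ_d - s}]` (the first `ℓ_d - s` left singular vectors) maximizes
`‖(Wᵀ ⊗ (V Γ̃)ᵀ) J‖_F²` over all `Γ̃ ∈ ℝ^{ℓ_d × (ℓ_d - s)}` with `Γ̃ᵀ Γ̃ = I`. -/
theorem downdating_detectors_optimal
    (nd ns np ls ld s : ℕ) (hs : s < ld)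
    (J : Matrix (Fin ns × Fin nd) (Fin np) ℝ)
    (W : Matrix (Fin ns) (Fin ls) ℝ) (V : Matrix (Fin nd) (Fin ld) ℝ)
    (hW : Wᵀ * W = 1) (hV : Vᵀ * V = 1)
    (Φ : Matrix (Fin ld) (Fin ld) ℝ) (Ψ : Matrix (Fin ls × Fin np) (Fin ls × Fin np) ℝ)
    (ω : ℕ → ℝ)
    (hΦ : Φᵀ * Φ = 1) (hΨ : Ψᵀ * Ψ = 1)
    (hword : ∀ i j : ℕ, i ≤ j → ω j ≤ ω i) (hw0 : ∀ i, 0 ≤ ω i)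
    (hSVD : Vᵀ * (Matrix.of fun i (q : Fin ls × Fin np) => starOp (fun j => W j q.1) J i q.2)
      = Φ * svDiagR ld ls np ω * Ψᵀ) :
    IsGreatest
      {x : ℝ | ∃ Γt : Matrix (Fin ld) (Fin (ld - s)) ℝ, Γtᵀ * Γt = 1 ∧
        x = frobSq ((Wᵀ ⊗ₖ (V * Γt)ᵀ) * J)}
      (frobSq ((Wᵀ ⊗ₖ (V * Φ.submatrix id (Fin.castLE (Nat.sub_le ld s)))ᵀ) * J)) :=
  downdating_detectors_optimal_general nd ns np ls ld s J W V Φ Ψ ω hΦ hΨ hword hw0 hSVD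
end

section
/- Let [V V_c] ∈ R^{n_d×n_d} be orthogonal, W ∈ R^{n_s×ℓ_s} with orthonormal columns, Ĵ_i = w_i ⋆ J, and let V_c^T [Ĵ_1 … Ĵ_{ℓ_s}] = Φ Ω Ψ^T be an SVD. Then Γ = [φ_1 … φ_s] (the first s left singular vectors) maximizes ‖(W^T ⊗ [V, V_c Γ̃]^T) J‖_F^2 over all Γ̃ ∈ R^{(n_d−ℓ_d)×s} with orthonormal columns. -/
open Matrix
open scoped BigOperators Kronecker

/-!
Only the block of rows of `(Wᵀ ⊗ [V, V_c Γ̃]ᵀ) J` coming from `V_c Γ̃` depends on `Γ̃`, and its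
squared Frobenius norm is `‖Γ̃ᵀ V_cᵀ Ĵ‖² = ‖(ΦᵀΓ̃)ᵀ Ω‖² = ∑ᵢ ωᵢ² ‖row_i (ΦᵀΓ̃)‖²`. Since `ΦᵀΓ̃` has
orthonormal columns, its squared row norms lie in `[0, 1]` and add up to `s`; for decreasing
weights `ωᵢ²` such a weighted sum is largest when the first `s` rows have norm one, which is
attained by `Γ̃ = [φ_1 … φ_s]`.
-/

section Frobenius

variable {α β γ δ η ι : Type*} [Fintype α] [Fintype β] [Fintype γ] [Fintype δ]

lemma frobSq_eq_trace_mul_transpose (A : Matrix α β ℝ) : frobSq A = trace (A * Aᵀ) := by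
  simp [frobSq, trace, mul_apply, sq]

lemma frobSq_mul_transpose_of_orthogonal [DecidableEq β] (A : Matrix α β ℝ) {Ψ : Matrix β β ℝ}
    (hΨ : Ψᵀ * Ψ = 1) : frobSq (A * Ψᵀ) = frobSq A := by
  rw [frobSq_eq_trace_mul_transpose, frobSq_eq_trace_mul_transpose, transpose_mul,
    transpose_transpose, Matrix.mul_assoc, ← Matrix.mul_assoc Ψᵀ, hΨ, Matrix.one_mul]

lemma frobSq_transpose_mul_of_mul_transpose_eq_diagonal [DecidableEq α] (Q : Matrix α β ℝ)
    {D : Matrix α γ ℝ} {c : α → ℝ} (hD : D * Dᵀ = diagonal c) :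
    frobSq (Qᵀ * D) = ∑ i, c i * ∑ b, Q i b ^ 2 := by
  rw [frobSq_eq_trace_mul_transpose, transpose_mul, transpose_transpose,
    show Qᵀ * D * (Dᵀ * Q) = Qᵀ * (D * Dᵀ) * Q by simp only [Matrix.mul_assoc], hD]
  simp only [trace, diag, mul_apply, transpose_apply, diagonal_apply, mul_ite, mul_zero,
    Finset.sum_ite_eq', Finset.mem_univ, if_true, Finset.mul_sum]
  rw [Finset.sum_comm]
  exact Finset.sum_congr rfl fun _ _ => Finset.sum_congr rfl fun _ _ => by ring

lemma frobSq_eq_add_of_rows_sum (M : Matrix (γ × (α ⊕ β)) δ ℝ) :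
    frobSq M = frobSq (M.submatrix (Prod.map id Sum.inl) id)
      + frobSq (M.submatrix (Prod.map id Sum.inr) id) := by
  simp [frobSq, Fintype.sum_prod_type, Fintype.sum_sum_type, Finset.sum_add_distrib]

lemma frobSq_kronecker_fromCols_mul [Fintype η] [Fintype ι] (W : Matrix η γ ℝ)
    (A : Matrix ι α ℝ) (B : Matrix ι β ℝ) (J : Matrix (η × ι) δ ℝ) :
    frobSq ((Wᵀ ⊗ₖ (fromCols A B)ᵀ) * J)
      = frobSq ((Wᵀ ⊗ₖ Aᵀ) * J) + frobSq ((Wᵀ ⊗ₖ Bᵀ) * J) :=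
  frobSq_eq_add_of_rows_sum _

end Frobenius

section OrthonormalColumns

variable {α β : Type*} [Fintype α] [Fintype β] [DecidableEq β] {Q : Matrix α β ℝ}

lemma sum_sq_row_le_one_of_transpose_mul_self_eq_one (hQ : Qᵀ * Q = 1) (i : α) :
    ∑ b, Q i b ^ 2 ≤ 1 := by
  -- `P = Q Qᵀ` is an orthogonal projection: `P i i = ∑ j, P i j ^ 2 ≥ P i i ^ 2`.
  set P := Q * Qᵀ
  have hP_idem : P * P = P := by
    rw [Matrix.mul_assoc, ← Matrix.mul_assoc Qᵀ, hQ, Matrix.one_mul]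
  have hPii : P i i = ∑ b, Q i b ^ 2 := by simp [P, mul_apply, sq]
  have hPii_eq : P i i = ∑ j, P i j ^ 2 := by
    conv_lhs => rw [← hP_idem]
    simp [P, mul_apply, sq, mul_comm]
  have : P i i ^ 2 ≤ P i i := hPii_eq ▸ Finset.single_le_sum (fun j _ => sq_nonneg (P i j))
    (Finset.mem_univ i)
  nlinarith [show 0 ≤ P i i by rw [hPii]; positivity]

lemma sum_sum_sq_eq_card_of_transpose_mul_self_eq_one (hQ : Qᵀ * Q = 1) :
    ∑ i, ∑ b, Q i b ^ 2 = Fintype.card β := by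
  have hcol : ∀ b, ∑ i, Q i b ^ 2 = 1 := fun b => by
    simpa [mul_apply, sq] using congrFun (congrFun hQ b) b
  simp [Finset.sum_comm (γ := α), hcol]

end OrthonormalColumns

lemma sum_mul_le_sum_castLE_of_antitone {m s : ℕ} (hs : s ≤ m) {c r : Fin m → ℝ}
    (hc : Antitone c) (hr0 : ∀ i, 0 ≤ r i) (hr1 : ∀ i, r i ≤ 1) (hr : ∑ i, r i = s) :
    ∑ i, c i * r i ≤ ∑ b : Fin s, c (Fin.castLE hs b) := by
  -- Exchange argument against a threshold `θ` separating the first `s` values of `c` from the rest.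
  obtain ⟨k, rfl⟩ := Nat.exists_eq_add_of_le hs
  obtain ⟨θ, hθ_le, hle_θ⟩ : ∃ θ, (∀ b : Fin s, θ ≤ c (Fin.castAdd k b)) ∧
      ∀ j : Fin k, c (Fin.natAdd s j) ≤ θ := by
    rcases k with _ | k
    · obtain ⟨θ, hθ⟩ := (Set.finite_range c).bddBelow
      exact ⟨θ, fun b => hθ ⟨_, rfl⟩, fun j => j.elim0⟩
    · exact ⟨c (Fin.natAdd s 0), fun b => hc (Fin.le_def.2 (by simp)),
        fun j => hc (Fin.le_def.2 (by simp))⟩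
  rw [Fin.sum_univ_add] at hr ⊢
  have hhead : ∀ b, c (Fin.castAdd k b) * r (Fin.castAdd k b)
      ≤ c (Fin.castAdd k b) - θ * (1 - r (Fin.castAdd k b)) := fun b => by
    nlinarith [hθ_le b, hr1 (Fin.castAdd k b)]
  have htail : ∀ j, c (Fin.natAdd s j) * r (Fin.natAdd s j) ≤ θ * r (Fin.natAdd s j) :=
    fun j => mul_le_mul_of_nonneg_right (hle_θ j) (hr0 _)
  calc _ ≤ ∑ b, (c (Fin.castAdd k b) - θ * (1 - r (Fin.castAdd k b)))
          + ∑ j, θ * r (Fin.natAdd s j) :=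
        add_le_add (Finset.sum_le_sum fun b _ => hhead b) (Finset.sum_le_sum fun j _ => htail j)
    _ = ∑ b, c (Fin.castAdd k b) := by
        simp only [Finset.sum_sub_distrib, ← Finset.mul_sum, Finset.sum_const, Finset.card_univ,
          Fintype.card_fin, nsmul_eq_mul, mul_one]
        linear_combination θ * hr

lemma sum_mul_sum_sq_submatrix_one {α β : Type*} [Fintype α] [Fintype β] [DecidableEq α]
    (c : α → ℝ) (e : β → α) :
    ∑ i, c i * ∑ b, (1 : Matrix α α ℝ).submatrix id e i b ^ 2 = ∑ b, c (e b) := by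
  simp only [submatrix_apply, id, one_apply, ite_pow, one_pow, ne_eq, OfNat.ofNat_ne_zero,
    not_false_eq_true, zero_pow, Finset.mul_sum, mul_ite, mul_one, mul_zero]
  rw [Finset.sum_comm]
  simp

/-- The paper's `[Ĵ_1 … Ĵ_{ℓ_s}]`, where `Ĵ_a = w_a ⋆ J` and `w_a` is the `a`-th column of `W`. -/
def starConcat {ns nd ls np : ℕ} (W : Matrix (Fin ns) (Fin ls) ℝ)
    (J : Matrix (Fin ns × Fin nd) (Fin np) ℝ) : Matrix (Fin nd) (Fin ls × Fin np) ℝ :=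
  Matrix.of fun i q => starOp (fun j => W j q.1) J i q.2

lemma frobSq_kronecker_mul_eq_frobSq_starConcat {β : Type*} [Fintype β] {ns nd ls np : ℕ}
    (W : Matrix (Fin ns) (Fin ls) ℝ) (B : Matrix (Fin nd) β ℝ)
    (J : Matrix (Fin ns × Fin nd) (Fin np) ℝ) :
    frobSq ((Wᵀ ⊗ₖ Bᵀ) * J) = frobSq (Bᵀ * starConcat W J) := by
  have hentry : ∀ a b k, ((Wᵀ ⊗ₖ Bᵀ) * J) (a, b) k = (Bᵀ * starConcat W J) b (a, k) := by
    intro a b k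
    simp only [mul_apply, kroneckerMap_apply, transpose_apply, starConcat, starOp, of_apply,
      Fintype.sum_prod_type, Finset.mul_sum]
    rw [Finset.sum_comm]
    exact Finset.sum_congr rfl fun _ _ => Finset.sum_congr rfl fun _ _ => by ring
  simp only [frobSq, Fintype.sum_prod_type, hentry]
  exact Finset.sum_comm

lemma svDiagR_mul_transpose_s13 (m a b : ℕ) (ω : ℕ → ℝ) :
    svDiagR m a b ω * (svDiagR m a b ω)ᵀ
      = diagonal (fun i : Fin m => if (i : ℕ) < a * b then ω i ^ 2 else 0) := by
  ext i i'
  rw [mul_apply, ← finProdFinEquiv.symm.sum_comp]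
  simp only [svDiagR, of_apply, transpose_apply, Equiv.apply_symm_apply]
  rw [Fin.sum_univ_eq_sum_range (fun n => (if (i : ℕ) = n then ω i else 0) *
    (if (i' : ℕ) = n then ω i' else 0))]
  simp only [ite_mul, zero_mul, Finset.sum_ite_eq, Finset.mem_range, diagonal_apply, mul_ite,
    mul_zero, Fin.val_inj]
  by_cases h : i = i' <;> simp [h, sq]

lemma frobSq_detectors_eq_add {ns nd ls np l m s : ℕ} (J : Matrix (Fin ns × Fin nd) (Fin np) ℝ)
    (W : Matrix (Fin ns) (Fin ls) ℝ) (V : Matrix (Fin nd) (Fin l) ℝ)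
    (Vc : Matrix (Fin nd) (Fin m) ℝ) (Φ : Matrix (Fin m) (Fin m) ℝ)
    (Ψ : Matrix (Fin ls × Fin np) (Fin ls × Fin np) ℝ) (ω : ℕ → ℝ) (hΨ : Ψᵀ * Ψ = 1)
    (hSVD : Vcᵀ * starConcat W J = Φ * svDiagR m ls np ω * Ψᵀ) (Γ : Matrix (Fin m) (Fin s) ℝ) :
    frobSq ((Wᵀ ⊗ₖ (fromCols V (Vc * Γ))ᵀ) * J) = frobSq ((Wᵀ ⊗ₖ Vᵀ) * J)
      + ∑ i : Fin m, (if (i : ℕ) < ls * np then ω i ^ 2 else 0) * ∑ b, (Φᵀ * Γ) i b ^ 2 := by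
  have hSVD_Γ : Γᵀ * (Vcᵀ * starConcat W J) = (Φᵀ * Γ)ᵀ * svDiagR m ls np ω * Ψᵀ := by
    simp only [hSVD, transpose_mul, transpose_transpose, Matrix.mul_assoc]
  rw [frobSq_kronecker_fromCols_mul, frobSq_kronecker_mul_eq_frobSq_starConcat W (Vc * Γ),
    transpose_mul, Matrix.mul_assoc, hSVD_Γ, frobSq_mul_transpose_of_orthogonal _ hΨ,
    frobSq_transpose_mul_of_mul_transpose_eq_diagonal _ (svDiagR_mul_transpose_s13 m ls np ω)]

theorem adding_detectors_optimal_general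
    (nd ns np ls ld s : ℕ) (hs : s ≤ nd - ld)
    (J : Matrix (Fin ns × Fin nd) (Fin np) ℝ)
    (W : Matrix (Fin ns) (Fin ls) ℝ)
    (V : Matrix (Fin nd) (Fin ld) ℝ) (Vc : Matrix (Fin nd) (Fin (nd - ld)) ℝ)
    (Φ : Matrix (Fin (nd - ld)) (Fin (nd - ld)) ℝ)
    (Ψ : Matrix (Fin ls × Fin np) (Fin ls × Fin np) ℝ) (ω : ℕ → ℝ)
    (hΦ : Φᵀ * Φ = 1) (hΨ : Ψᵀ * Ψ = 1)
    (hword : ∀ i j : ℕ, i ≤ j → ω j ≤ ω i) (hw0 : ∀ i, 0 ≤ ω i)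
    (hSVD : Vcᵀ * (Matrix.of fun i (q : Fin ls × Fin np) => starOp (fun j => W j q.1) J i q.2)
      = Φ * svDiagR (nd - ld) ls np ω * Ψᵀ) :
    IsGreatest
      {x : ℝ | ∃ Γt : Matrix (Fin (nd - ld)) (Fin s) ℝ, Γtᵀ * Γt = 1 ∧
        x = frobSq ((Wᵀ ⊗ₖ (Matrix.fromCols V (Vc * Γt))ᵀ) * J)}
      (frobSq ((Wᵀ ⊗ₖ (Matrix.fromCols V (Vc * Φ.submatrix id (Fin.castLE hs)))ᵀ) * J)) := by
  have hc : Antitone fun i : Fin (nd - ld) => if (i : ℕ) < ls * np then ω i ^ 2 else 0 := by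
    intro i j hij
    dsimp only
    split_ifs with hj hi hi
    · exact pow_le_pow_left₀ (hw0 j) (hword i j hij) 2
    · exact absurd ((Fin.le_def.1 hij).trans_lt hj) hi
    · positivity
    · rfl
  have hΦ_sub :
      Φᵀ * Φ.submatrix id (Fin.castLE hs) = (1 : Matrix _ _ ℝ).submatrix id (Fin.castLE hs) := by
    rw [← hΦ, submatrix_mul _ _ id id _ Function.bijective_id, submatrix_id_id]
  refine ⟨⟨_, ?_, rfl⟩, ?_⟩
  · rw [transpose_submatrix, ← submatrix_mul _ _ _ id _ Function.bijective_id, hΦ,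
      submatrix_one _ (Fin.castLE_injective hs)]
  rintro _ ⟨Γ, hΓ, rfl⟩
  have hQ : (Φᵀ * Γ)ᵀ * (Φᵀ * Γ) = 1 := by
    rw [transpose_mul, transpose_transpose, Matrix.mul_assoc, ← Matrix.mul_assoc Φ,
      mul_eq_one_comm.mp hΦ, Matrix.one_mul, hΓ]
  simp only [frobSq_detectors_eq_add J W V Vc Φ Ψ ω hΨ hSVD, hΦ_sub, sum_mul_sum_sq_submatrix_one]
  gcongr
  exact sum_mul_le_sum_castLE_of_antitone hs hc (fun i => by positivity)
    (sum_sq_row_le_one_of_transpose_mul_self_eq_one hQ)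
    (by rw [sum_sum_sq_eq_card_of_transpose_mul_self_eq_one hQ, Fintype.card_fin])

/-- Let `[V V_c]` be orthogonal, `W` have orthonormal columns, `Ĵ_a = w_a ⋆ J`, and let
`V_cᵀ [Ĵ_1 … Ĵ_{ℓ_s}] = Φ Ω Ψᵀ` be an SVD with decreasing singular values.  Then
`Γ = [φ_1 … φ_s]` maximizes `‖(Wᵀ ⊗ [V, V_c Γ̃]ᵀ) J‖_F²` over all
`Γ̃ ∈ ℝ^{(n_d - ℓ_d) × s}` with orthonormal columns. -/
theorem adding_detectors_optimal
    (nd ns np ls ld s : ℕ) (hs : s ≤ nd - ld)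
    (J : Matrix (Fin ns × Fin nd) (Fin np) ℝ)
    (W : Matrix (Fin ns) (Fin ls) ℝ) (hW : Wᵀ * W = 1)
    (V : Matrix (Fin nd) (Fin ld) ℝ) (Vc : Matrix (Fin nd) (Fin (nd - ld)) ℝ)
    (hVVc : (Matrix.fromCols V Vc)ᵀ * Matrix.fromCols V Vc = 1)
    (Φ : Matrix (Fin (nd - ld)) (Fin (nd - ld)) ℝ)
    (Ψ : Matrix (Fin ls × Fin np) (Fin ls × Fin np) ℝ) (ω : ℕ → ℝ)
    (hΦ : Φᵀ * Φ = 1) (hΨ : Ψᵀ * Ψ = 1)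
    (hword : ∀ i j : ℕ, i ≤ j → ω j ≤ ω i) (hw0 : ∀ i, 0 ≤ ω i)
    (hSVD : Vcᵀ * (Matrix.of fun i (q : Fin ls × Fin np) => starOp (fun j => W j q.1) J i q.2)
      = Φ * svDiagR (nd - ld) ls np ω * Ψᵀ) :
    IsGreatest
      {x : ℝ | ∃ Γt : Matrix (Fin (nd - ld)) (Fin s) ℝ, Γtᵀ * Γt = 1 ∧
        x = frobSq ((Wᵀ ⊗ₖ (Matrix.fromCols V (Vc * Γt))ᵀ) * J)}
      (frobSq ((Wᵀ ⊗ₖ (Matrix.fromCols V (Vc * Φ.submatrix id (Fin.castLE hs)))ᵀ) * J)) :=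
  adding_detectors_optimal_general nd ns np ls ld s hs J W V Vc Φ Ψ ω hΦ hΨ hword hw0 hSVD
end
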